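/- For a symmetric matrix M and its projection P_S(M) = U max(Λ,0) Uᵀ, P_S(M) is a nearest positive semidefinite matrix to M in Frobenius norm: ‖M - P_S(M)‖_F ≤ ‖M - A‖_F for all symmetric positive semidefinite A. -/

import Mathlib

/-!
Conjugation by the orthogonal `U` preserves the Frobenius norm and positive semidefiniteness, so
it suffices to treat `M = diagonal lam`. A positive semidefinite `B` has nonnegative diagonal
entries, `max (lam i) 0` is the nonnegative number nearest to `lam i`, and the off-diagonal
entries of `B` only add to the distance.
-/

open Matrix

/-- Frobenius norm of a real matrix. -/
noncomputable def frobNorm {d : ℕ} (A : Matrix (Fin d) (Fin d) ℝ) : ℝ :=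
  Real.sqrt (∑ i, ∑ j, (A i j) ^ 2)

lemma Matrix.sum_sq_entries_eq_trace_transpose_mul {m n R : Type*} [Fintype m] [Fintype n]
    [CommSemiring R] (X : Matrix m n R) :
    ∑ i, ∑ j, X i j ^ 2 = (Xᵀ * X).trace := by
  simp only [trace, diag, mul_apply, transpose_apply, sq]
  exact Finset.sum_comm

lemma Matrix.sum_sq_diag_le_sum_sq_entries {n : Type*} [Fintype n] (X : Matrix n n ℝ) :
    ∑ i, X i i ^ 2 ≤ ∑ i, ∑ j, X i j ^ 2 :=
  Finset.sum_le_sum fun i _ =>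
    Finset.single_le_sum (f := fun j => X i j ^ 2) (fun _ _ => sq_nonneg _) (Finset.mem_univ i)

lemma frobNorm_orthogonal_conj {d : ℕ} {U : Matrix (Fin d) (Fin d) ℝ} (hU : Uᵀ * U = 1)
    (X : Matrix (Fin d) (Fin d) ℝ) : frobNorm (U * X * Uᵀ) = frobNorm X := by
  have hconj : (U * X * Uᵀ)ᵀ * (U * X * Uᵀ) = U * (Xᵀ * X) * Uᵀ := by
    simp only [transpose_mul, transpose_transpose, Matrix.mul_assoc]
    rw [← Matrix.mul_assoc Uᵀ U, hU, Matrix.one_mul]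
  simp only [frobNorm, sum_sq_entries_eq_trace_transpose_mul, hconj]
  rw [trace_mul_cycle, ← Matrix.mul_assoc, hU, Matrix.one_mul]

lemma frobNorm_diagonal {d : ℕ} (v : Fin d → ℝ) :
    frobNorm (diagonal v) = Real.sqrt (∑ i, v i ^ 2) := by
  simp [frobNorm, diagonal_apply]

lemma sq_sub_max_zero_le_sq_sub {x b : ℝ} (hb : 0 ≤ b) : (x - max x 0) ^ 2 ≤ (x - b) ^ 2 := by
  rcases le_total x 0 with hx | hx
  · rw [max_eq_right hx]
    nlinarith
  · rw [max_eq_left hx, sub_self]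
    simpa using sq_nonneg (x - b)

lemma frobNorm_diagonal_sub_truncation_le {d : ℕ} (lam : Fin d → ℝ)
    {B : Matrix (Fin d) (Fin d) ℝ} (hB : ∀ i, 0 ≤ B i i) :
    frobNorm (diagonal lam - diagonal (fun i => max (lam i) 0)) ≤ frobNorm (diagonal lam - B) := by
  rw [diagonal_sub, frobNorm_diagonal, frobNorm]
  apply Real.sqrt_le_sqrt
  calc ∑ i, (lam i - max (lam i) 0) ^ 2
      ≤ ∑ i, (diagonal lam - B) i i ^ 2 :=
        Finset.sum_le_sum fun i _ => by simpa using sq_sub_max_zero_le_sq_sub (x := lam i) (hB i)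
    _ ≤ ∑ i, ∑ j, (diagonal lam - B) i j ^ 2 := sum_sq_diag_le_sum_sq_entries _

theorem eigenvalue_truncation_nearest_psd_general
    {d : ℕ} (M U : Matrix (Fin d) (Fin d) ℝ) (lam : Fin d → ℝ)
    (hU : Uᵀ * U = 1)
    (hdecomp : M = U * diagonal lam * Uᵀ) :
    ∀ A : Matrix (Fin d) (Fin d) ℝ, A.PosSemidef →
      frobNorm (M - U * diagonal (fun i => max (lam i) 0) * Uᵀ) ≤
        frobNorm (M - A) := by
  intro A hA
  have hUU : U * Uᵀ = 1 := mul_eq_one_comm.mp hU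
  have hA_conj : A = U * (Uᵀ * A * U) * Uᵀ := by
    simp only [Matrix.mul_assoc, hUU, Matrix.mul_one]
    rw [← Matrix.mul_assoc, hUU, Matrix.one_mul]
  have hB : (Uᵀ * A * U).PosSemidef := by
    simpa using hA.conjTranspose_mul_mul_same U
  rw [hdecomp, hA_conj, ← sub_mul, ← mul_sub, ← sub_mul, ← mul_sub,
    frobNorm_orthogonal_conj hU, frobNorm_orthogonal_conj hU]
  exact frobNorm_diagonal_sub_truncation_le lam fun _ => hB.diag_nonneg

theorem eigenvalue_truncation_nearest_psd
    {d : ℕ} (M U : Matrix (Fin d) (Fin d) ℝ) (lam : Fin d → ℝ)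
    (hsymm : Mᵀ = M) (hU : Uᵀ * U = 1)
    (hdecomp : M = U * diagonal lam * Uᵀ) :
    ∀ A : Matrix (Fin d) (Fin d) ℝ, A.PosSemidef →
      frobNorm (M - U * diagonal (fun i => max (lam i) 0) * Uᵀ) ≤
        frobNorm (M - A) :=
  eigenvalue_truncation_nearest_psd_general M U lam hU hdecomp
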